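/- For all y in (0, π), 1/sin(y)^2 - 1/y^2 ≥ 1/3. -/

import Mathlib

open Real

/-!
Clearing denominators, the inequality says `sin y ^ 2 * (3 + y ^ 2) ≤ 3 * y ^ 2`. Comparing
derivatives twice, starting from `x - x ^ 3 / 6 ≤ sin x`, bounds `sin y` above by its Taylor
polynomial of degree 5 on `y ≥ 0`; with that bound the claim becomes the nonnegativity of a cubic
in `y ^ 2` on `[0, π ^ 2]`.
-/

theorem le_of_hasDerivAt_le {f g f' g' : ℝ → ℝ} {a x : ℝ} (hf : ∀ t, HasDerivAt f (f' t) t)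
    (hg : ∀ t, HasDerivAt g (g' t) t) (ha : f a ≤ g a) (hderiv : ∀ t, a ≤ t → f' t ≤ g' t)
    (hx : a ≤ x) : f x ≤ g x :=
  image_le_of_deriv_right_le_deriv_boundary (fun t _ => (hf t).continuousAt.continuousWithinAt)
    (fun t _ => (hf t).hasDerivWithinAt) ha (fun t _ => (hg t).continuousAt.continuousWithinAt)
    (fun t _ => (hg t).hasDerivWithinAt) (fun t ht => hderiv t ht.1) ⟨hx, le_rfl⟩

namespace Real

theorem cos_le_one_sub_sq_div_two_add_pow_four_div {x : ℝ} (hx : 0 ≤ x) :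
    cos x ≤ 1 - x ^ 2 / 2 + x ^ 4 / 24 := by
  refine le_of_hasDerivAt_le (g := fun t => 1 - t ^ 2 / 2 + t ^ 4 / 24)
    (f' := fun t => -sin t) (g' := fun t => -t + t ^ 3 / 6) hasDerivAt_cos (fun t => ?_)
    (by simp) (fun t ht => ?_) hx
  · exact ((((hasDerivAt_pow 2 t).div_const 2).const_sub 1).add
      ((hasDerivAt_pow 4 t).div_const 24)).congr_deriv (by norm_num; ring)
  · linarith [sin_ge_sub_cube ht]

theorem sin_le_sub_cube_add_pow_five_div {x : ℝ} (hx : 0 ≤ x) :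
    sin x ≤ x - x ^ 3 / 6 + x ^ 5 / 120 := by
  refine le_of_hasDerivAt_le (g := fun t => t - t ^ 3 / 6 + t ^ 5 / 120)
    (g' := fun t => 1 - t ^ 2 / 2 + t ^ 4 / 24) hasDerivAt_sin (fun t => ?_) (by simp)
    (fun t ht => cos_le_one_sub_sq_div_two_add_pow_four_div ht) hx
  exact (((hasDerivAt_id t).sub ((hasDerivAt_pow 3 t).div_const 6)).add
    ((hasDerivAt_pow 5 t).div_const 120)).congr_deriv (by norm_num; ring)

theorem sin_sq_mul_three_add_sq_le {y : ℝ} (hy₀ : 0 < y) (hyπ : y < π) :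
    sin y ^ 2 * (3 + y ^ 2) ≤ 3 * y ^ 2 := by
  have hsin_pos : 0 < sin y := sin_pos_of_pos_of_lt_pi hy₀ hyπ
  have hsin_le : sin y ≤ y - y ^ 3 / 6 + y ^ 5 / 120 := sin_le_sub_cube_add_pow_five_div hy₀.le
  have hy_sq : y ^ 2 ≤ 9.9225 := by nlinarith [pi_lt_d2]
  -- on `[0, 9.9225]` the cubic below is close to `(9.9225 - t) (t - 13.54) ^ 2 ≥ 0`
  have hcubic : 0 ≤ 2880 - 520 * y ^ 2 + 37 * y ^ 4 - y ^ 6 := by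
    nlinarith [mul_nonneg (sub_nonneg.2 hy_sq) (sq_nonneg (y ^ 2 - 13.54)), sq_nonneg (y ^ 2)]
  calc sin y ^ 2 * (3 + y ^ 2) ≤ (y - y ^ 3 / 6 + y ^ 5 / 120) ^ 2 * (3 + y ^ 2) := by gcongr
    _ = 3 * y ^ 2 - y ^ 6 * (2880 - 520 * y ^ 2 + 37 * y ^ 4 - y ^ 6) / 14400 := by ring
    _ ≤ 3 * y ^ 2 := sub_le_self _ (div_nonneg (mul_nonneg (by positivity) hcubic) (by norm_num))

end Real

theorem stmt_2 (y : ℝ) (hy : y ∈ Set.Ioo 0 π) :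
    1 / Real.sin y ^ 2 - 1 / y ^ 2 ≥ 1 / 3 := by
  obtain ⟨hy₀, hyπ⟩ := hy
  have hsin_sq : 0 < sin y ^ 2 := pow_pos (sin_pos_of_pos_of_lt_pi hy₀ hyπ) 2
  rw [ge_iff_le, div_sub_div _ _ hsin_sq.ne' (by positivity), div_le_div_iff₀ (by norm_num)
    (by positivity)]
  linarith [sin_sq_mul_three_add_sq_le hy₀ hyπ]
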